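/- arXiv:1703.02960 — 2 statements merged into one kernel-verified Lean document; each statement's English description precedes it below -/
import Mathlib

section
/- The 2×2 complex matrix A with rows (1, 1) and (0, −1) satisfies 'A Aᴴ A is similar to A', but A is not a partial isometry. -/
open Matrix

def IsPartialIsometry {n : Type*} [Fintype n] (V : Matrix n n ℂ) : Prop :=
  V * Vᴴ * V = V

def MatSimilar {n : Type*} [Fintype n] [DecidableEq n] (A B : Matrix n n ℂ) : Prop :=
  ∃ S : Matrix n n ℂ, IsUnit S ∧ A = S * B * S⁻¹

noncomputable def nullity {n : Type*} [Fintype n] (A : Matrix n n ℂ) : ℕ :=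
  Module.finrank ℂ (LinearMap.ker A.mulVecLin)

noncomputable def algMult {n : Type*} [Fintype n] [DecidableEq n]
    (A : Matrix n n ℂ) (lam : ℂ) : ℕ :=
  A.charpoly.rootMultiplicity lam

noncomputable def geoMult {n : Type*} [Fintype n] [DecidableEq n]
    (A : Matrix n n ℂ) (lam : ℂ) : ℕ :=
  nullity (A - lam • 1)

def jordanBlock (m : ℕ) (μ : ℂ) : Matrix (Fin m) (Fin m) ℂ :=
  Matrix.of fun i j => if (i : ℕ) = (j : ℕ) then μ else if (i : ℕ) + 1 = (j : ℕ) then 1 else 0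

/-!
The matrix `A` has the distinct eigenvalues `1` and `-1`, and so does `A Aᴴ A = !![2, 3; -1, -2]`
(trace `0`, determinant `-1`); two matrices diagonalizable with the same spectrum are similar.
On the other hand `A` is invertible, and an invertible partial isometry is unitary, whereas the
second column of `A` has norm `√2`.
-/

theorem MatSimilar.of_mul_eq_mul {n : Type*} [Fintype n] [DecidableEq n]
    {A B S : Matrix n n ℂ} (hS : IsUnit S) (h : A * S = S * B) : MatSimilar A B :=
  ⟨S, hS, by rw [← h, mul_nonsing_inv_cancel_right _ _ ((isUnit_iff_isUnit_det S).mp hS)]⟩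

theorem IsPartialIsometry.mul_conjTranspose_eq_one {n : Type*} [Fintype n] [DecidableEq n]
    {V : Matrix n n ℂ} (hV : IsPartialIsometry V) (hunit : IsUnit V) : V * Vᴴ = 1 :=
  hunit.mul_left_injective (hV.trans (one_mul V).symm)

theorem counterexample_in_S_not_partial_isometry :
    MatSimilar ((!![1, 1; 0, -1] : Matrix (Fin 2) (Fin 2) ℂ) *
        (!![1, 1; 0, -1] : Matrix (Fin 2) (Fin 2) ℂ)ᴴ *
        (!![1, 1; 0, -1] : Matrix (Fin 2) (Fin 2) ℂ))
      (!![1, 1; 0, -1] : Matrix (Fin 2) (Fin 2) ℂ) ∧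
    ¬ IsPartialIsometry (!![1, 1; 0, -1] : Matrix (Fin 2) (Fin 2) ℂ) := by
  set A : Matrix (Fin 2) (Fin 2) ℂ := !![1, 1; 0, -1]
  have hAH : Aᴴ = !![1, 0; 1, -1] := by
    ext i j
    fin_cases i <;> fin_cases j <;> simp [A]
  have hAAH : A * Aᴴ = !![2, -1; -1, 1] := by
    rw [hAH]; norm_num [A]
  constructor
  · -- `S` sends the eigenvectors `(1, 0)`, `(1, -2)` of `A` (for `1`, `-1`)
    -- to the eigenvectors `(3, -1)`, `(1, -1)` of `A Aᴴ A`.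
    refine MatSimilar.of_mul_eq_mul (S := !![3, 1; -1, 0]) ?_ ?_
    · simp [isUnit_iff_isUnit_det, det_fin_two_of]
    · rw [hAAH]; norm_num [A]
  · intro hV
    have hunit : IsUnit A := by simp [A, isUnit_iff_isUnit_det, det_fin_two_of]
    have h := hV.mul_conjTranspose_eq_one hunit
    rw [hAAH] at h
    simpa using congrFun (congrFun h 0) 0
end

section
/- Let A be an n×n complex matrix such that every eigenvalue λ of A satisfies |λ| < 1 and such that the nullity of A is at least the nullity of A − λI for every eigenvalue λ of A. Suppose λ₁, …, λ_d are distinct nonzero complex numbers with |λᵢ| < 1, and n₀, n₁, …, n_d are positive integers with n₀ + n₁ + ⋯ + n_d = n. Then the block diagonal matrix B = J_{n₀}(0) ⊕ J_{n₁}(λ₁) ⊕ ⋯ ⊕ J_{n_d}(λ_d) is similar to a partial isometry. -/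
open Matrix

def MatrixSimilar {n : Type*} [Fintype n] [DecidableEq n] (A B : Matrix n n ℂ) : Prop :=
  ∃ S : Matrix n n ℂ, IsUnit S ∧ A = S * B * S⁻¹

/-!
List the eigenvalues of the Jordan blocks, block by block, as `μ₀ = 0, μ₁, …, μ_{N-1}`, all in the
open unit disc. Put `c₀ = 0`, `u₀ = e₀`, and for `q ≥ 1` let `(u_q, c_q)` be the image of the
orthonormal pair `(u_{q-1}, e_q)` under the unitary `[[-μ̄_q, s_q], [s_q, μ_q]]`, where
`s_q = √(1 - |μ_q|²)`. Then `u_q, c₁, …, c_q` is an orthonormal basis of `span (e₀, …, e_q)`, so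
the matrix `V` with columns `c_q` is a partial isometry; it is upper triangular with diagonal `μ`
and nonvanishing superdiagonal.

Such a matrix is similar to the Jordan matrix: the diagonal blocks of `V` belonging to distinct
eigenvalues have disjoint spectra, so Sylvester's equation clears the blocks above them, and an
upper triangular block with constant diagonal `λ` and nonvanishing superdiagonal is similar to
`J(λ)`.
-/

lemma IsConj.pi {ι : Type*} {M : ι → Type*} [∀ i, Monoid (M i)] {a b : ∀ i, M i}
    (h : ∀ i, IsConj (a i) (b i)) : IsConj a b := by
  choose c hc using h
  exact ⟨MulEquiv.piUnits.symm c, funext fun i => hc i⟩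

lemma IsConj.add_algebraMap {R A : Type*} [CommSemiring R] [Semiring A] [Algebra R A] {a b : A}
    (h : IsConj a b) (r : R) : IsConj (a + algebraMap R A r) (b + algebraMap R A r) := by
  obtain ⟨c, hc⟩ := h
  exact ⟨c, hc.add_right (Algebra.commutes r (c : A)).symm⟩

lemma matrixSimilar_of_isConj {n : Type*} [Fintype n] [DecidableEq n] {A B : Matrix n n ℂ}
    (h : IsConj B A) : MatrixSimilar A B := by
  obtain ⟨S, hS⟩ := h
  refine ⟨S, S.isUnit, ?_⟩
  rw [← coe_units_inv, hS.eq, Matrix.mul_assoc, Units.mul_inv, Matrix.mul_one]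

lemma IsPartialIsometry.reindex {m n : Type*} [Fintype m] [Fintype n] (e : m ≃ n)
    {V : Matrix m m ℂ} (hV : IsPartialIsometry V) : IsPartialIsometry (reindex e e V) := by
  rw [IsPartialIsometry, conjTranspose_reindex, reindex_apply, reindex_apply,
    submatrix_mul_equiv, submatrix_mul_equiv, hV]

namespace Matrix

section CommRing

variable {R : Type*} [CommRing R] {m n : Type*} [Fintype m] [DecidableEq m] [Fintype n]
  [DecidableEq n]

lemma isConj_reindex (e : m ≃ n) {A B : Matrix m m R} (h : IsConj A B) :
    IsConj (reindex e e A) (reindex e e B) :=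
  (reindexAlgEquiv R R e).toMonoidHom.map_isConj h

lemma isConj_blockDiagonal' {ι : Type*} [Fintype ι] [DecidableEq ι] {κ : ι → Type*}
    [∀ i, Fintype (κ i)] [∀ i, DecidableEq (κ i)] {A B : ∀ i, Matrix (κ i) (κ i) R}
    (h : ∀ i, IsConj (A i) (B i)) : IsConj (blockDiagonal' A) (blockDiagonal' B) :=
  (blockDiagonal'RingHom κ R).toMonoidHom.map_isConj (IsConj.pi h)

lemma isConj_fromBlocks_zero {A A' : Matrix m m R} {B B' : Matrix n n R} (hA : IsConj A A')
    (hB : IsConj B B') : IsConj (fromBlocks A 0 0 B) (fromBlocks A' 0 0 B') := by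
  obtain ⟨c, hc⟩ := hA
  obtain ⟨d, hd⟩ := hB
  let u : (Matrix (m ⊕ n) (m ⊕ n) R)ˣ :=
    ⟨fromBlocks c 0 0 d, fromBlocks ↑c⁻¹ 0 0 ↑d⁻¹, by simp [fromBlocks_multiply],
      by simp [fromBlocks_multiply]⟩
  exact ⟨u, by simp [u, SemiconjBy, fromBlocks_multiply, hc.eq, hd.eq]⟩

lemma isConj_fromBlocks_of_sylvester {P : Matrix m m R} {Q : Matrix n n R} {S X : Matrix m n R}
    (hX : X * Q - P * X = S) : IsConj (fromBlocks P 0 0 Q) (fromBlocks P S 0 Q) := by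
  let u : (Matrix (m ⊕ n) (m ⊕ n) R)ˣ :=
    ⟨fromBlocks 1 X 0 1, fromBlocks 1 (-X) 0 1, by simp [fromBlocks_multiply],
      by simp [fromBlocks_multiply]⟩
  refine ⟨u, ?_⟩
  simp only [u, SemiconjBy, fromBlocks_multiply]
  congr 1 <;> simp [← hX]

/-- `N := P - a` is nilpotent, so the Neumann series inverting `X ↦ X (Q - a) - N X` is finite. -/
lemma exists_sylvester (a : R) {P : Matrix m m R} {Q : Matrix n n R} {k : ℕ}
    (hP : (P - algebraMap R _ a) ^ k = 0) (hQ : IsUnit (Q - algebraMap R _ a)) (S : Matrix m n R) :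
    ∃ X : Matrix m n R, X * Q - P * X = S := by
  obtain ⟨Z, hZ⟩ := hQ.exists_left_inv
  simp only [Algebra.algebraMap_eq_smul_one] at hP hZ
  set N := P - a • 1
  have hstep : ∀ j, N ^ j * S * Z ^ (j + 1) * Q - P * (N ^ j * S * Z ^ (j + 1)) =
      N ^ j * S * Z ^ j - N ^ (j + 1) * S * Z ^ (j + 1) := by
    intro j
    have hZQ : Z ^ (j + 1) * (Q - a • 1) = Z ^ j := by
      rw [pow_succ, Matrix.mul_assoc, hZ, Matrix.mul_one]
    calc N ^ j * S * Z ^ (j + 1) * Q - P * (N ^ j * S * Z ^ (j + 1))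
        = N ^ j * S * (Z ^ (j + 1) * (Q - a • 1)) - N * (N ^ j * S * Z ^ (j + 1)) := by
          simp only [N, Matrix.mul_sub, Matrix.sub_mul, Matrix.mul_smul, Matrix.smul_mul,
            Matrix.mul_one, Matrix.one_mul, Matrix.mul_assoc]
          abel
      _ = N ^ j * S * Z ^ j - N ^ (j + 1) * S * Z ^ (j + 1) := by
          rw [hZQ, pow_succ' N, Matrix.mul_assoc N, Matrix.mul_assoc N]
  refine ⟨∑ j ∈ Finset.range k, N ^ j * S * Z ^ (j + 1), ?_⟩
  rw [Matrix.sum_mul, Matrix.mul_sum, ← Finset.sum_sub_distrib,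
    Finset.sum_congr rfl fun j _ => hstep j, Finset.sum_range_sub' (fun j => N ^ j * S * Z ^ j), hP]
  simp

lemma pow_card_eq_zero_of_isUpperTriangular [LinearOrder m] {N : Matrix m m R}
    (hN : N.IsUpperTriangular) (hdiag : ∀ i, N i i = 0) : N ^ Fintype.card m = 0 := by
  simpa [charpoly_of_isUpperTriangular N hN, hdiag] using aeval_self_charpoly N

end CommRing

section Field

variable {K : Type*} [Field K]

lemma isUnit_of_isUpperTriangular {n : Type*} [Fintype n] [DecidableEq n] [LinearOrder n]
    {M : Matrix n n K} (hM : M.IsUpperTriangular) (hdiag : ∀ i, M i i ≠ 0) : IsUnit M := by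
  rw [isUnit_iff_isUnit_det, det_of_isUpperTriangular hM, isUnit_iff_ne_zero]
  exact Finset.prod_ne_zero_iff.mpr fun i _ => hdiag i

def blockDiagonalPart {ι α R : Type*} [DecidableEq α] [Zero R] (b : ι → α) (W : Matrix ι ι R) :
    Matrix ι ι R :=
  of fun x y => if b x = b y then W x y else 0

theorem isConj_blockDiagonalPart {ι α : Type*} [Fintype ι] [LinearOrder ι] [LinearOrder α]
    {b : ι → α} (hb : Monotone b) {W : Matrix ι ι K} (hW : W.IsUpperTriangular)
    (hdiag : ∀ x y, W x x = W y y ↔ b x = b y) : IsConj (blockDiagonalPart b W) W := by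
  induction h : Fintype.card ι using Nat.strong_induction_on generalizing ι with
  | _ k ih =>
  rcases isEmpty_or_nonempty ι with hι | hι
  · rw [Subsingleton.elim (blockDiagonalPart b W) W]
  let x₀ : ι := Finset.univ.min' Finset.univ_nonempty
  let p : ι → Prop := fun x => b x = b x₀
  let E := Equiv.sumCompl p
  let P : Matrix {x // p x} {x // p x} K := W.submatrix (↑) (↑)
  let Q : Matrix {x // ¬p x} {x // ¬p x} K := W.submatrix (↑) (↑)
  have hP : (P - algebraMap K _ (W x₀ x₀)) ^ Fintype.card {x // p x} = 0 :=
    pow_card_eq_zero_of_isUpperTriangular (hW.submatrix.sub (blockTriangular_algebraMap _))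
      fun x => by simp [P, algebraMap_matrix_apply, (hdiag _ _).2 x.2]
  have hQ : IsUnit (Q - algebraMap K _ (W x₀ x₀)) :=
    isUnit_of_isUpperTriangular (hW.submatrix.sub (blockTriangular_algebraMap _))
      fun x => by simpa [Q, algebraMap_matrix_apply, sub_eq_zero] using mt (hdiag _ _).1 x.2
  obtain ⟨X, hX⟩ := exists_sylvester _ hP hQ (W.submatrix (↑) (↑))
  have hQ' : IsConj (blockDiagonalPart (fun x : {x // ¬p x} => b x) Q) Q :=
    ih _ (h ▸ Fintype.card_subtype_lt (x := x₀) (by simp [p])) (ι := {x // ¬p x}) (W := Q)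
      (hb.comp fun _ _ h => h) hW.submatrix (fun x y => hdiag x y) rfl
  have hmin : ∀ x, b x₀ ≤ b x := fun x => hb (Finset.min'_le _ _ (Finset.mem_univ x))
  have hsplit : reindex E E (fromBlocks P 0 0 (blockDiagonalPart (fun x : {x // ¬p x} => b x) Q))
      = blockDiagonalPart b W := by
    ext x y
    by_cases hx : b x = b x₀ <;> by_cases hy : b y = b x₀ <;>
      simp [blockDiagonalPart, E, p, P, Q, hx, hy, @eq_comm _ (b x₀),
        Equiv.sumCompl_symm_apply_of_pos, Equiv.sumCompl_symm_apply_of_neg]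
  have hW' : reindex E E (fromBlocks P (W.submatrix (↑) (↑)) 0 Q) = W := by
    ext x y
    by_cases hx : b x = b x₀ <;> by_cases hy : b y = b x₀ <;>
      simp [E, p, P, Q, hx, hy, Equiv.sumCompl_symm_apply_of_pos,
        Equiv.sumCompl_symm_apply_of_neg]
    exact (hW (hb.reflect_lt (lt_of_le_of_ne (hy ▸ hmin x) (hy ▸ Ne.symm hx)))).symm
  rw [← hsplit, ← hW']
  exact isConj_reindex E ((isConj_fromBlocks_zero (IsConj.refl P) hQ').trans
    (isConj_fromBlocks_of_sylvester hX))

end Field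

section StrictlyUpperTriangular

variable {R : Type*} [Semiring R] {m : ℕ} {N : Matrix (Fin m) (Fin m) R}

lemma pow_apply_eq_zero_of_lt_add (hN : ∀ i j : Fin m, (j : ℕ) ≤ i → N i j = 0) :
    ∀ (a : ℕ) (i j : Fin m), (j : ℕ) < i + a → (N ^ a) i j = 0
  | 0, i, j, h => one_apply_ne (Fin.ne_of_val_ne (by omega))
  | a + 1, i, j, h => by
    rw [pow_succ, mul_apply]
    refine Finset.sum_eq_zero fun l _ => ?_
    rcases le_or_gt (j : ℕ) l with hl | hl
    · rw [hN l j hl, mul_zero]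
    · rw [pow_apply_eq_zero_of_lt_add hN a i l (by omega), zero_mul]

lemma pow_apply_ne_zero_of_eq_add [NoZeroDivisors R] [Nontrivial R]
    (hN : ∀ i j : Fin m, (j : ℕ) ≤ i → N i j = 0)
    (hsup : ∀ i j : Fin m, (i : ℕ) + 1 = j → N i j ≠ 0) :
    ∀ (a : ℕ) (i j : Fin m), (j : ℕ) = i + a → (N ^ a) i j ≠ 0
  | 0, i, j, h => by simp [Fin.ext (h.symm : (i : ℕ) = j)]
  | a + 1, i, j, h => by
    let i' : Fin m := ⟨i + 1, by omega⟩
    rw [pow_succ', mul_apply, Finset.sum_eq_single i']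
    · exact mul_ne_zero (hsup i i' rfl)
        (pow_apply_ne_zero_of_eq_add hN hsup a i' j (by simp [i']; omega))
    · intro l _ hl
      rcases le_or_gt (l : ℕ) i with hli | hli
      · rw [hN i l hli, zero_mul]
      · rw [pow_apply_eq_zero_of_lt_add hN a l j (by simp [i', Fin.ext_iff] at hl; omega),
          mul_zero]
    · simp

end StrictlyUpperTriangular

end Matrix

lemma isConj_jordanBlock_zero {m : ℕ} {N : Matrix (Fin m) (Fin m) ℂ}
    (hN : ∀ i j : Fin m, (j : ℕ) ≤ i → N i j = 0)
    (hsup : ∀ i j : Fin m, (i : ℕ) + 1 = j → N i j ≠ 0) :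
    IsConj (jordanBlock m 0) N := by
  cases m with
  | zero => exact ⟨1, Subsingleton.elim _ _⟩
  | succ k =>
  let S : Matrix (Fin (k + 1)) (Fin (k + 1)) ℂ := of fun p q => (N ^ (k - q)) p (Fin.last k)
  have hS : IsUnit S := by
    refine isUnit_of_isUpperTriangular (fun p q hpq => ?_) fun q => ?_
    · have : (q : ℕ) < p := hpq
      exact pow_apply_eq_zero_of_lt_add hN _ _ _ (by simp; omega)
    · exact pow_apply_ne_zero_of_eq_add hN hsup _ _ _ (by simp; omega)
  refine ⟨hS.unit, ?_⟩
  ext p ⟨q, hq⟩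
  have hNS : (N * S) p ⟨q, hq⟩ = (N ^ (k - q + 1)) p (Fin.last k) := by
    rw [pow_succ', mul_apply, mul_apply]; rfl
  rw [IsUnit.unit_spec, hNS, mul_apply]
  rcases q with _ | q
  · rw [pow_apply_eq_zero_of_lt_add hN _ _ _ (by simp; omega)]
    simp [jordanBlock]
  · rw [Finset.sum_eq_single ⟨q, by omega⟩]
    · simp [jordanBlock, S, show k - q = k - (q + 1) + 1 by omega]
    · intro l _ hl
      simp [jordanBlock, Fin.ext_iff] at hl ⊢
      omega
    · simp

lemma isConj_jordanBlock {m : ℕ} {μ : ℂ} {W : Matrix (Fin m) (Fin m) ℂ}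
    (hW : W.IsUpperTriangular) (hdiag : ∀ i, W i i = μ)
    (hsup : ∀ i j : Fin m, (i : ℕ) + 1 = j → W i j ≠ 0) :
    IsConj (jordanBlock m μ) W := by
  have hJ : jordanBlock m μ = jordanBlock m 0 + algebraMap ℂ _ μ := by
    ext i j
    by_cases h : i = j <;> simp [jordanBlock, algebraMap_matrix_apply, h, Fin.val_eq_val]
  have hN : ∀ i j : Fin m, (j : ℕ) ≤ i → (W - algebraMap ℂ _ μ) i j = 0 := by
    intro i j hji
    rcases hji.lt_or_eq with hji | hji
    · simp [algebraMap_matrix_apply, hW hji, Fin.ne_of_val_ne hji.ne']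
    · simp [algebraMap_matrix_apply, Fin.ext hji, hdiag]
  rw [hJ, ← sub_add_cancel W (algebraMap ℂ _ μ)]
  refine (isConj_jordanBlock_zero hN fun i j hij => ?_).add_algebraMap μ
  simpa [algebraMap_matrix_apply, Fin.ne_of_val_ne (by omega : (i : ℕ) ≠ j)]
    using hsup i j hij

noncomputable def defect (z : ℂ) : ℂ := ((√(1 - ‖z‖ ^ 2) : ℝ) : ℂ)

lemma star_defect (z : ℂ) : star (defect z) = defect z := Complex.conj_ofReal _

lemma star_defect_mul_defect {z : ℂ} (hz : ‖z‖ ≤ 1) :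
    star (defect z) * defect z = 1 - star z * z := by
  have h : 0 ≤ 1 - ‖z‖ ^ 2 := by nlinarith [norm_nonneg z]
  rw [star_defect, defect, ← Complex.ofReal_mul, Real.mul_self_sqrt h, Complex.star_def,
    Complex.conj_mul']
  push_cast; ring

lemma defect_ne_zero {z : ℂ} (hz : ‖z‖ < 1) : defect z ≠ 0 := by
  have h : 0 < 1 - ‖z‖ ^ 2 := by nlinarith [norm_nonneg z]
  exact Complex.ofReal_ne_zero.mpr (Real.sqrt_pos.mpr h).ne'

section UnitVec

variable {N : ℕ}

/-- `e_k`, indexed by `k : ℕ` so that the recursions below need no bounds; it is `0` for `N ≤ k`. -/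
def unitVec (N k : ℕ) : Fin N → ℂ := fun p => if (p : ℕ) = k then 1 else 0

lemma star_unitVec_dotProduct_unitVec {k : ℕ} (hk : k < N) :
    star (unitVec N k) ⬝ᵥ unitVec N k = 1 := by
  have : unitVec N k = Pi.single ⟨k, hk⟩ 1 := by
    ext p; simp [unitVec, Pi.single_apply, Fin.ext_iff]
  simp [this]

lemma star_dotProduct_unitVec_eq_zero {f : Fin N → ℂ} {k : ℕ}
    (hf : ∀ p : Fin N, (p : ℕ) = k → f p = 0) : star f ⬝ᵥ unitVec N k = 0 :=
  Finset.sum_eq_zero fun p _ => by by_cases h : (p : ℕ) = k <;> simp [unitVec, h, hf]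

lemma star_dotProduct_of_orthonormal {u e : Fin N → ℂ} (hu : star u ⬝ᵥ u = 1)
    (he : star e ⬝ᵥ e = 1) (hue : star u ⬝ᵥ e = 0) (a b c d : ℂ) :
    star (a • u + b • e) ⬝ᵥ (c • u + d • e) = star a * c + star b * d := by
  have heu : star e ⬝ᵥ u = 0 := by rw [star_dotProduct, hue, star_zero]
  simp only [star_add, star_smul, add_dotProduct, dotProduct_add, smul_dotProduct,
    dotProduct_smul, hu, he, hue, heu, smul_eq_mul]
  ring

end UnitVec

namespace TriangularPartialIsometry

variable {N : ℕ} (μ : ℕ → ℂ)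

noncomputable def complVec : ℕ → Fin N → ℂ
  | 0 => unitVec N 0
  | j + 1 => (-star (μ (j + 1))) • complVec j + defect (μ (j + 1)) • unitVec N (j + 1)

noncomputable def column : ℕ → Fin N → ℂ
  | 0 => 0
  | q + 1 => defect (μ (q + 1)) • complVec μ q + μ (q + 1) • unitVec N (q + 1)

variable {μ}

lemma complVec_apply_of_lt : ∀ {j : ℕ} {p : Fin N}, j < p → complVec μ j p = 0
  | 0, p, h => by simp [complVec, unitVec, h.ne']
  | j + 1, p, h => by
    simp [complVec, unitVec, complVec_apply_of_lt (by omega : j < p), h.ne']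

lemma column_apply_of_lt : ∀ {q : ℕ} {p : Fin N}, q < p → column μ q p = 0
  | 0, _, _ => rfl
  | q + 1, p, h => by simp [column, unitVec, complVec_apply_of_lt (by omega : q < p), h.ne']

lemma complVec_apply_ne_zero (hμ : ∀ k, ‖μ k‖ < 1) :
    ∀ {j : ℕ} {p : Fin N}, (p : ℕ) = j → complVec μ j p ≠ 0
  | 0, p, h => by simp [complVec, unitVec, h]
  | j + 1, p, h => by
    simp [complVec, unitVec, complVec_apply_of_lt (by omega : j < p), h, defect_ne_zero (hμ _)]

lemma star_complVec_dotProduct_complVec (hμ : ∀ k, ‖μ k‖ < 1) :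
    ∀ {j : ℕ}, j < N → star (complVec μ j : Fin N → ℂ) ⬝ᵥ complVec μ j = 1
  | 0, h => star_unitVec_dotProduct_unitVec h
  | j + 1, h => by
    rw [complVec, star_dotProduct_of_orthonormal (star_complVec_dotProduct_complVec hμ (by omega))
      (star_unitVec_dotProduct_unitVec h)
      (star_dotProduct_unitVec_eq_zero fun p hp => complVec_apply_of_lt (by omega)),
      star_defect_mul_defect (hμ _).le, star_neg, star_star]
    ring

lemma star_column_dotProduct_complVec (hμ : ∀ k, ‖μ k‖ < 1) :
    ∀ {j q : ℕ}, j < N → q ≤ j → star (column μ q : Fin N → ℂ) ⬝ᵥ complVec μ j = 0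
  | _, 0, _, _ => by simp [column]
  | 0, q + 1, _, hq => by omega
  | j + 1, q + 1, h, hq => by
    rcases hq.lt_or_eq with hq | hq
    · rw [complVec, dotProduct_add, dotProduct_smul, dotProduct_smul,
        star_column_dotProduct_complVec hμ (by omega) (by omega),
        star_dotProduct_unitVec_eq_zero fun p hp => column_apply_of_lt (by omega)]
      simp
    · obtain rfl : q = j := by omega
      rw [column, complVec, star_dotProduct_of_orthonormal
        (star_complVec_dotProduct_complVec hμ (by omega)) (star_unitVec_dotProduct_unitVec h)
        (star_dotProduct_unitVec_eq_zero fun p hp => complVec_apply_of_lt (by omega)),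
        star_defect]
      ring

lemma star_column_dotProduct_column_of_lt (hμ : ∀ k, ‖μ k‖ < 1) {q r : ℕ} (hqr : q < r)
    (hr : r < N) : star (column μ q : Fin N → ℂ) ⬝ᵥ column μ r = 0 := by
  obtain ⟨r, rfl⟩ : ∃ r', r = r' + 1 := ⟨r - 1, by omega⟩
  rw [column, dotProduct_add, dotProduct_smul, dotProduct_smul,
    star_column_dotProduct_complVec hμ (by omega) (by omega),
    star_dotProduct_unitVec_eq_zero fun p hp => column_apply_of_lt (by omega)]
  simp

lemma star_column_dotProduct_column_self (hμ : ∀ k, ‖μ k‖ < 1) {q : ℕ} (hq : q + 1 < N) :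
    star (column μ (q + 1) : Fin N → ℂ) ⬝ᵥ column μ (q + 1) = 1 := by
  rw [column, star_dotProduct_of_orthonormal (star_complVec_dotProduct_complVec hμ (by omega))
    (star_unitVec_dotProduct_unitVec hq)
    (star_dotProduct_unitVec_eq_zero fun p hp => complVec_apply_of_lt (by omega)),
    star_defect_mul_defect (hμ _).le]
  ring

end TriangularPartialIsometry

open TriangularPartialIsometry

noncomputable def triangularPartialIsometry {N : ℕ} (μ : ℕ → ℂ) : Matrix (Fin N) (Fin N) ℂ :=
  of fun p q => column μ q p

section TriangularPartialIsometry

variable {N : ℕ} {μ : ℕ → ℂ}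

lemma conjTranspose_mul_triangularPartialIsometry (hμ : ∀ k, ‖μ k‖ < 1) :
    (triangularPartialIsometry μ)ᴴ * triangularPartialIsometry μ =
      diagonal fun q : Fin N => if (q : ℕ) = 0 then 0 else 1 := by
  ext q r
  change star (column μ q : Fin N → ℂ) ⬝ᵥ column μ r = _
  rcases lt_trichotomy (q : ℕ) r with h | h | h
  · rw [star_column_dotProduct_column_of_lt hμ h r.2, diagonal_apply_ne _ (Fin.ne_of_val_ne h.ne)]
  · obtain rfl := Fin.ext h
    obtain ⟨_ | q, hq⟩ := q
    · simp [column]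
    · simp [star_column_dotProduct_column_self hμ hq]
  · rw [star_dotProduct, star_column_dotProduct_column_of_lt hμ h q.2, star_zero,
      diagonal_apply_ne _ (Fin.ne_of_val_ne h.ne')]

theorem isPartialIsometry_triangularPartialIsometry (hμ : ∀ k, ‖μ k‖ < 1) :
    IsPartialIsometry (triangularPartialIsometry (N := N) μ) := by
  rw [IsPartialIsometry, Matrix.mul_assoc, conjTranspose_mul_triangularPartialIsometry hμ]
  ext p q
  by_cases hq : (q : ℕ) = 0 <;> simp [hq, triangularPartialIsometry, column]

lemma triangularPartialIsometry_isUpperTriangular :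
    (triangularPartialIsometry (N := N) μ).IsUpperTriangular :=
  fun _ _ h => column_apply_of_lt h

lemma triangularPartialIsometry_apply_self (hμ₀ : μ 0 = 0) (p : Fin N) :
    triangularPartialIsometry μ p p = μ p := by
  obtain ⟨_ | q, hq⟩ := p
  · simp [triangularPartialIsometry, column, hμ₀]
  · simp [triangularPartialIsometry, column, unitVec, complVec_apply_of_lt]

lemma triangularPartialIsometry_apply_ne_zero (hμ : ∀ k, ‖μ k‖ < 1) {p q : Fin N}
    (h : (p : ℕ) + 1 = q) : triangularPartialIsometry μ p q ≠ 0 := by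
  obtain ⟨q, hq⟩ := q
  subst h
  simp [triangularPartialIsometry, column, unitVec, defect_ne_zero (hμ _),
    complVec_apply_ne_zero hμ rfl]

end TriangularPartialIsometry

section FinSigmaFinEquiv

variable {k : ℕ} {ns : Fin k → ℕ}

lemma finSigmaFinEquiv_val (i : Fin k) (p : Fin (ns i)) :
    (finSigmaFinEquiv ⟨i, p⟩ : ℕ) =
      ∑ l ∈ Finset.range i, (if h : l < k then ns ⟨l, h⟩ else 0) + p := by
  rw [finSigmaFinEquiv_apply, ← Fin.sum_univ_eq_sum_range]
  congr 1
  exact Finset.sum_congr rfl fun l _ => by simp [Fin.castLE, l.2.trans i.2]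

lemma finSigmaFinEquiv_lt_of_fst_lt {z w : (i : Fin k) × Fin (ns i)} (h : z.1 < w.1) :
    finSigmaFinEquiv z < finSigmaFinEquiv w := by
  obtain ⟨i, p⟩ := z
  obtain ⟨j, q⟩ := w
  rw [Fin.lt_def, finSigmaFinEquiv_val, finSigmaFinEquiv_val]
  let g : ℕ → ℕ := fun l => if h : l < k then ns ⟨l, h⟩ else 0
  calc ∑ l ∈ Finset.range i, g l + p < ∑ l ∈ Finset.range (i + 1), g l := by
        rw [Finset.sum_range_succ]; simp [g, i.2]
    _ ≤ ∑ l ∈ Finset.range j, g l :=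
        Finset.sum_le_sum_of_subset (Finset.range_subset_range.2 (Fin.lt_def.1 h))
    _ ≤ _ := Nat.le_add_right _ _

lemma monotone_fst_finSigmaFinEquiv_symm :
    Monotone fun x => (finSigmaFinEquiv.symm x : (i : Fin k) × Fin (ns i)).1 := by
  intro x y hxy
  by_contra h
  have := finSigmaFinEquiv_lt_of_fst_lt (not_le.1 h)
  simp only [Equiv.apply_symm_apply] at this
  exact absurd hxy (not_le.2 this)

theorem isConj_blockDiagonal'_jordanBlock {v : Fin k → ℂ} (hv : Function.Injective v)
    {W : Matrix (Fin (∑ i, ns i)) (Fin (∑ i, ns i)) ℂ} (hW : W.IsUpperTriangular)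
    (hdiag : ∀ x, W x x = v (finSigmaFinEquiv.symm x).1)
    (hsup : ∀ x y : Fin (∑ i, ns i), (x : ℕ) + 1 = y → W x y ≠ 0) :
    IsConj (blockDiagonal' fun i => jordanBlock (ns i) (v i))
      (reindex finSigmaFinEquiv.symm finSigmaFinEquiv.symm W) := by
  let e : (i : Fin k) × Fin (ns i) ≃ Fin (∑ i, ns i) := finSigmaFinEquiv
  have hblocks : ∀ i, IsConj (jordanBlock (ns i) (v i))
      (W.submatrix (fun p => e ⟨i, p⟩) fun p => e ⟨i, p⟩) := fun i => by
    refine isConj_jordanBlock (fun p q hpq => hW ?_) (fun p => ?_) fun p q hpq => hsup _ _ ?_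
    · simp only [id, Fin.lt_def, e, finSigmaFinEquiv_val] at hpq ⊢; omega
    · simp [hdiag, e]
    · simp only [e, finSigmaFinEquiv_val]; omega
  have hpart : reindex e.symm e.symm (blockDiagonalPart (fun x => (e.symm x).1) W) =
      blockDiagonal' fun i => W.submatrix (fun p => e ⟨i, p⟩) fun p => e ⟨i, p⟩ := by
    ext ⟨i, p⟩ ⟨j, q⟩
    by_cases hij : i = j
    · subst hij; simp [blockDiagonalPart, blockDiagonal'_apply_eq]
    · simp [blockDiagonalPart, blockDiagonal'_apply_ne _ _ _ hij, hij]
  refine (isConj_blockDiagonal' hblocks).trans ?_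
  rw [← hpart]
  exact isConj_reindex e.symm (isConj_blockDiagonalPart monotone_fst_finSigmaFinEquiv_symm hW
    fun x y => by rw [hdiag, hdiag, hv.eq_iff])

end FinSigmaFinEquiv

theorem jordan_direct_sum_similar_to_partial_isometry_general
    (d : ℕ) (lam : Fin d → ℂ)
    (hdist : Function.Injective lam) (hne : ∀ i, lam i ≠ 0)
    (hlt : ∀ i, ‖lam i‖ < 1)
    (ns : Fin (d + 1) → ℕ) (hpos : ∀ i, 0 < ns i) :
    ∃ V : Matrix ((i : Fin (d + 1)) × Fin (ns i)) ((i : Fin (d + 1)) × Fin (ns i)) ℂ,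
      IsPartialIsometry V ∧
      MatrixSimilar
        (Matrix.blockDiagonal' fun i => jordanBlock (ns i) (Fin.cases 0 lam i)) V := by
  let v : Fin (d + 1) → ℂ := Fin.cons 0 lam
  have hv : Function.Injective v := Fin.cons_injective_iff.2 ⟨fun ⟨i, hi⟩ => hne i hi, hdist⟩
  have hv_lt : ∀ i, ‖v i‖ < 1 := Fin.cases (by simp [v]) hlt
  let e : (i : Fin (d + 1)) × Fin (ns i) ≃ Fin (∑ i, ns i) := finSigmaFinEquiv
  let μ : ℕ → ℂ := fun k => if h : k < ∑ i, ns i then v (e.symm ⟨k, h⟩).1 else 0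
  have hμ : ∀ k, ‖μ k‖ < 1 := fun k => by
    by_cases h : k < ∑ i, ns i <;> simp [μ, h, hv_lt]
  have hμ₀ : μ 0 = 0 := by
    have hN : 0 < ∑ i, ns i :=
      (hpos 0).trans_le (Finset.single_le_sum (fun _ _ => Nat.zero_le _) (Finset.mem_univ 0))
    have he : e.symm ⟨0, hN⟩ = ⟨0, ⟨0, hpos 0⟩⟩ :=
      e.symm_apply_eq.2 (Fin.ext (by rw [finSigmaFinEquiv_val]; simp))
    simp [μ, hN, he, v]
  refine ⟨reindex e.symm e.symm (triangularPartialIsometry μ),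
    (isPartialIsometry_triangularPartialIsometry hμ).reindex _,
    matrixSimilar_of_isConj (isConj_blockDiagonal'_jordanBlock hv
      triangularPartialIsometry_isUpperTriangular (fun x => ?_)
      fun x y => triangularPartialIsometry_apply_ne_zero hμ).symm⟩
  simp [triangularPartialIsometry_apply_self hμ₀, μ, e]

theorem jordan_direct_sum_similar_to_partial_isometry {n : ℕ}
    (A : Matrix (Fin n) (Fin n) ℂ)
    (hA1 : ∀ lam ∈ spectrum ℂ A, ‖lam‖ < 1)
    (hA2 : ∀ lam ∈ spectrum ℂ A, nullity (A - lam • 1) ≤ nullity A)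
    (d : ℕ) (lam : Fin d → ℂ)
    (hdist : Function.Injective lam) (hne : ∀ i, lam i ≠ 0)
    (hlt : ∀ i, ‖lam i‖ < 1)
    (ns : Fin (d + 1) → ℕ) (hpos : ∀ i, 0 < ns i)
    (hsum : ∑ i, ns i = n) :
    ∃ V : Matrix ((i : Fin (d + 1)) × Fin (ns i)) ((i : Fin (d + 1)) × Fin (ns i)) ℂ,
      IsPartialIsometry V ∧
      MatrixSimilar
        (Matrix.blockDiagonal' fun i => jordanBlock (ns i) (Fin.cases 0 lam i)) V :=
  jordan_direct_sum_similar_to_partial_isometry_general d lam hdist hne hlt ns hpos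
end
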